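/- arXiv:1804.02349 — 2 statements merged into one kernel-verified Lean document; each statement's English description precedes it below -/
import Mathlib

section
/- Let H be a reproducing kernel Hilbert space of analytic functions on a domain D ⊂ ℂ in which for each w ∈ D the operation of dividing out a zero at w is bounded on {f ∈ H : f(w) = 0}. Fix g analytic with g(w) ≠ 0 for w in some open set, and define T_w f = (f − (f(w)/g(w))·g)/(z − w). Then the operators satisfy the resolvent-type identity T_{w'} − T_w = (w' − w)·T_{w'} T_w whenever both are defined. -/
/-- The division operator `T_w f = (f − (f(w)/g(w))·g)/(z − w)`. -/
noncomputable def divOp (g : ℂ → ℂ) (w : ℂ) (f : ℂ → ℂ) : ℂ → ℂ :=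
  fun z => (f z - (f w / g w) * g z) / (z - w)

/-- Auxiliary algebraic identity with atomic denominators. -/
lemma divOp_aux (a b c G Gw Gw' v s u : ℂ) (h2 : v ≠ 0) (h3 : s ≠ 0) (h1 : u ≠ 0)
    (hu : u = v + s) (h4 : Gw ≠ 0) (h5 : Gw' ≠ 0) :
    (a - c / Gw' * G) / v - (a - b / Gw * G) / u =
      s * ((((a - b / Gw * G) / u) - ((c - b / Gw * Gw') / s) / Gw' * G) / v) := by
  rw [← mul_div_assoc]
  simp only [div_div, div_mul_eq_mul_div]
  rw [div_sub_div _ _ h1 (mul_ne_zero h3 h5), div_sub_div _ _ h2 h1, mul_div_assoc', div_div,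
    div_eq_div_iff (mul_ne_zero h2 h1) (mul_ne_zero (mul_ne_zero h1 (mul_ne_zero h3 h5)) h2)]
  subst hu
  field_simp
  ring

/-- In a space of analytic functions on a domain `D`, with `g`
analytic and nonvanishing at `w, w'`, the division operators
`T_w f = (f − (f(w)/g(w))·g)/(z − w)` satisfy the resolvent-type identity
`T_{w'} − T_w = (w' − w)·T_{w'}T_w` (pointwise, away from the poles `w, w'`). -/
theorem stmt10 (D : Set ℂ) (hD : IsOpen D) (f g : ℂ → ℂ)
    (hf : DifferentiableOn ℂ f D) (hg : DifferentiableOn ℂ g D)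
    (w w' : ℂ) (hwD : w ∈ D) (hw'D : w' ∈ D)
    (hgw : g w ≠ 0) (hgw' : g w' ≠ 0) (hne : w ≠ w') :
    ∀ z : ℂ, z ≠ w → z ≠ w' →
      divOp g w' f z - divOp g w f z = (w' - w) * divOp g w' (divOp g w f) z := by
  intro z hzw hzw'
  have h1 : z - w ≠ 0 := sub_ne_zero.mpr hzw
  have h2 : z - w' ≠ 0 := sub_ne_zero.mpr hzw'
  have h3 : w' - w ≠ 0 := sub_ne_zero.mpr hne.symm
  simp only [divOp]
  exact divOp_aux (f z) (f w) (f w') (g z) (g w) (g w') (z - w') (w' - w) (z - w)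
    h2 h3 h1 (by ring) hgw hgw'
end

section
/- Let T = {tₙ} be a lacunary sequence of nonzero complex numbers (inf_n |t_{n+1}/tₙ| > 1, |tₙ| increasing to ∞), and suppose Σₙ |dₙ| < ∞. Then Σₙ dₙ/(z − tₙ) → 0 as |z| → ∞ subject to dist(z, T) ≥ 1, and |Σₙ tₙ dₙ/(z − tₙ)| = o(|z|) as |z| → ∞ subject to dist(z, T) ≥ 1. -/
open Filter

lemma ratio_bound (z t : ℂ) (h1 : 1 ≤ ‖z - t‖) (hz : 1 ≤ ‖z‖) :
    ‖t‖ / ‖z - t‖ ≤ 2 * ‖z‖ := by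
  have hpos : (0:ℝ) < ‖z - t‖ := lt_of_lt_of_le one_pos h1
  rcases le_or_gt ‖t‖ (2 * ‖z‖) with h | h
  · calc ‖t‖ / ‖z - t‖ ≤ ‖t‖ := div_le_self (norm_nonneg _) h1
      _ ≤ 2 * ‖z‖ := h
  · have h2 : ‖t‖ - ‖z‖ ≤ ‖z - t‖ := by
      have := norm_sub_norm_le t z
      rwa [norm_sub_rev] at this
    rw [div_le_iff₀ hpos]
    nlinarith

lemma split_bound (f : ℕ → ℂ) (hf : Summable fun n => ‖f n‖) (N : ℕ) :
    ‖∑' n, f n‖ ≤ ∑ n ∈ Finset.range N, ‖f n‖ + ∑' n, ‖f (n + N)‖ := by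
  rw [← Summable.sum_add_tsum_nat_add N hf.of_norm]
  refine (norm_add_le _ _).trans (add_le_add (norm_sum_le _ _) ?_)
  exact norm_tsum_le_tsum_norm ((summable_nat_add_iff N).mpr hf)

set_option maxHeartbeats 1000000 in
/-- Let `T = {tₙ}` be a lacunary sequence of nonzero complex numbers
(`inf |t_{n+1}/tₙ| > 1`, `|tₙ|` increasing to `∞`) and `Σₙ |dₙ| < ∞`. Then
`Σₙ dₙ/(z − tₙ) → 0` and `|Σₙ tₙdₙ/(z − tₙ)| = o(|z|)` as `|z| → ∞` subject to
`dist(z, T) ≥ 1`. -/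
theorem stmt14 (t : ℕ → ℂ) (ht0 : ∀ n, t n ≠ 0)
    (hmono : Monotone fun n => ‖t n‖)
    (htinf : Tendsto (fun n => ‖t n‖) atTop atTop)
    (q : ℝ) (hq : 1 < q) (hlac : ∀ n, q * ‖t n‖ ≤ ‖t (n + 1)‖)
    (d : ℕ → ℂ) (hd : Summable fun n => ‖d n‖) :
    (∀ ε > (0 : ℝ), ∃ R : ℝ, ∀ z : ℂ, R ≤ ‖z‖ → (∀ n, 1 ≤ ‖z - t n‖) →
        ‖∑' n, d n / (z - t n)‖ ≤ ε) ∧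
    (∀ ε > (0 : ℝ), ∃ R : ℝ, ∀ z : ℂ, R ≤ ‖z‖ → (∀ n, 1 ≤ ‖z - t n‖) →
        ‖∑' n, t n * d n / (z - t n)‖ ≤ ε * ‖z‖) := by
  set C : ℝ := ∑' n, ‖d n‖ with hC
  have hC0 : 0 ≤ C := tsum_nonneg fun n => norm_nonneg _
  have htail : ∀ δ > (0:ℝ), ∃ N : ℕ, ∑' n, ‖d (n + N)‖ < δ := by
    intro δ hδ
    exact ((tendsto_sum_nat_add fun n => ‖d n‖).eventually_lt_const hδ).exists
  constructor
  · -- Part 1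
    intro ε hε
    obtain ⟨N, hN⟩ := htail (ε / 2) (by linarith)
    set M : ℝ := ∑ n ∈ Finset.range N, ‖t n‖ with hM
    set K : ℝ := 2 * (C + 1) / ε with hKdef
    have hK : 0 < K := by positivity
    refine ⟨M + K + 1, fun z hz hdist => ?_⟩
    have hdpos : ∀ n, (0:ℝ) < ‖z - t n‖ := fun n => lt_of_lt_of_le one_pos (hdist n)
    have hnorm : ∀ n, ‖d n / (z - t n)‖ ≤ ‖d n‖ := fun n => by
      rw [norm_div]; exact div_le_self (norm_nonneg _) (hdist n)
    have hs : Summable fun n => ‖d n / (z - t n)‖ :=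
      Summable.of_nonneg_of_le (fun n => norm_nonneg _) hnorm hd
    refine (split_bound _ hs N).trans ?_
    have head : ∑ n ∈ Finset.range N, ‖d n / (z - t n)‖ ≤ ε / 2 := by
      have h1 : ∀ n ∈ Finset.range N, ‖d n / (z - t n)‖ ≤ ‖d n‖ / K := by
        intro n hn
        have htn : ‖t n‖ ≤ M :=
          Finset.single_le_sum (f := fun n => ‖t n‖) (fun i _ => norm_nonneg _) hn
        have hden : K ≤ ‖z - t n‖ := by
          have := norm_sub_norm_le z (t n)
          linarith
        rw [norm_div]
        exact div_le_div_of_nonneg_left (norm_nonneg _) hK hden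
      calc ∑ n ∈ Finset.range N, ‖d n / (z - t n)‖
          ≤ ∑ n ∈ Finset.range N, ‖d n‖ / K := Finset.sum_le_sum h1
        _ = (∑ n ∈ Finset.range N, ‖d n‖) / K := by rw [Finset.sum_div]
        _ ≤ (C + 1) / K := by
            gcongr
            exact le_trans (Summable.sum_le_tsum _ (fun i _ => norm_nonneg _) hd) (by linarith)
        _ = ε / 2 := by
            rw [hKdef]
            field_simp
    have tail : ∑' n, ‖d (n + N) / (z - t (n + N))‖ ≤ ε / 2 := by
      refine le_trans (Summable.tsum_le_tsum (fun n => hnorm (n + N))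
        ((summable_nat_add_iff N).mpr hs) ((summable_nat_add_iff N).mpr hd)) hN.le
    linarith
  · -- Part 2
    intro ε hε
    obtain ⟨N, hN⟩ := htail (ε / 4) (by linarith)
    set M : ℝ := ∑ n ∈ Finset.range N, ‖t n‖ with hM
    have hM0 : 0 ≤ M := Finset.sum_nonneg fun i _ => norm_nonneg _
    set A : ℝ := M * (C + 1) with hA
    have hA0 : 0 < A + 1 := by positivity
    refine ⟨max 1 (2 * (A + 1) / ε), fun z hz hdist => ?_⟩
    have hz1 : 1 ≤ ‖z‖ := le_trans (le_max_left _ _) hz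
    have hzA : 2 * (A + 1) / ε ≤ ‖z‖ := le_trans (le_max_right _ _) hz
    have hzA' : A + 1 ≤ ε * ‖z‖ / 2 := by
      rw [div_le_iff₀ hε] at hzA
      linarith
    have hdpos : ∀ n, (0:ℝ) < ‖z - t n‖ := fun n => lt_of_lt_of_le one_pos (hdist n)
    have hnorm : ∀ n, ‖t n * d n / (z - t n)‖ ≤ 2 * ‖z‖ * ‖d n‖ := by
      intro n
      rw [norm_div, norm_mul]
      calc ‖t n‖ * ‖d n‖ / ‖z - t n‖ = ‖t n‖ / ‖z - t n‖ * ‖d n‖ := by ring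
        _ ≤ 2 * ‖z‖ * ‖d n‖ := by
            have := ratio_bound z (t n) (hdist n) hz1
            exact mul_le_mul_of_nonneg_right this (norm_nonneg _)
    have hs : Summable fun n => ‖t n * d n / (z - t n)‖ :=
      Summable.of_nonneg_of_le (fun n => norm_nonneg _) hnorm (hd.mul_left _)
    refine (split_bound _ hs N).trans ?_
    have head : ∑ n ∈ Finset.range N, ‖t n * d n / (z - t n)‖ ≤ A := by
      have h1 : ∀ n ∈ Finset.range N, ‖t n * d n / (z - t n)‖ ≤ M * ‖d n‖ := by
        intro n hn
        have htn : ‖t n‖ ≤ M :=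
          Finset.single_le_sum (f := fun n => ‖t n‖) (fun i _ => norm_nonneg _) hn
        rw [norm_div, norm_mul]
        calc ‖t n‖ * ‖d n‖ / ‖z - t n‖ ≤ ‖t n‖ * ‖d n‖ :=
              div_le_self (by positivity) (hdist n)
          _ ≤ M * ‖d n‖ := mul_le_mul_of_nonneg_right htn (norm_nonneg _)
      calc ∑ n ∈ Finset.range N, ‖t n * d n / (z - t n)‖
          ≤ ∑ n ∈ Finset.range N, M * ‖d n‖ := Finset.sum_le_sum h1
        _ = M * ∑ n ∈ Finset.range N, ‖d n‖ := by rw [Finset.mul_sum]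
        _ ≤ M * (C + 1) := by
            have := Summable.sum_le_tsum (Finset.range N) (fun i _ => norm_nonneg (d i)) hd
            exact mul_le_mul_of_nonneg_left (by linarith) hM0
    have tail : ∑' n, ‖t (n + N) * d (n + N) / (z - t (n + N))‖ ≤ 2 * ‖z‖ * (ε / 4) := by
      calc ∑' n, ‖t (n + N) * d (n + N) / (z - t (n + N))‖
          ≤ ∑' n, 2 * ‖z‖ * ‖d (n + N)‖ :=
            Summable.tsum_le_tsum (fun n => hnorm (n + N)) ((summable_nat_add_iff N).mpr hs)
              (((summable_nat_add_iff N).mpr hd).mul_left _)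
        _ = 2 * ‖z‖ * ∑' n, ‖d (n + N)‖ := tsum_mul_left
        _ ≤ 2 * ‖z‖ * (ε / 4) := by
            refine mul_le_mul_of_nonneg_left hN.le (by positivity)
    have : 2 * ‖z‖ * (ε / 4) = ε * ‖z‖ / 2 := by ring
    rw [this] at tail
    have hAA : A ≤ A + 1 := by linarith
    linarith
end
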